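/- arXiv:1411.0935 — 4 statements merged into one kernel-verified Lean document; each statement's English description precedes it below -/
import Mathlib

section
/- Let G be a d-regular simple graph on N vertices with d > 0, and suppose the smallest eigenvalue of the adjacency matrix of G is −λ. Then i(G) ≤ (Σ_{s=0}^{⌈σN⌉} C(N,s)) · 2^{αN}, where α = λ/(d+λ) and σ = ln(d+1)/(d+λ). -/
/-!
Since `-λ` bounds the spectrum of the adjacency matrix `A` from below, `A + λ I` is positive
semidefinite; as `A 𝟙 = d 𝟙`, testing it against the centred indicator vector of a vertex set `C`
gives a vertex `u ∈ C` with at least `(d + λ)|C|/N - λ` neighbours in `C`. A stable set inside `C`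
either avoids `u`, or contains `u` and avoids its neighbours; in the second case `|C| - c` drops
by the factor `1 - q ≤ e^{-q}`, where `q = (d + λ)/N` and `c = (λ - 1)/q`. After `⌈σN⌉` branchings
of the second kind at most `αN` vertices remain, so unfolding the branching with Pascal's rule
bounds `i(G)` by `Σ_{s ≤ ⌈σN⌉} C(N,s) · 2^⌊αN⌋`.
-/

open Filter
open scoped symmDiff

variable {α : Type*}

/-- The rank of a matroid: the common cardinality of its bases. -/
noncomputable def Matroid.rnk (M : Matroid α) : ℕ :=
  sSup {k | ∃ B, M.IsBase B ∧ B.ncard = k}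

/-- The rank function of a matroid. -/
noncomputable def Matroid.rkFun (M : Matroid α) (X : Set α) : ℕ :=
  sSup {k | ∃ I, I ⊆ X ∧ M.Indep I ∧ I.ncard = k}

/-- A circuit: a minimal dependent set. -/
def Matroid.IsCircuitSet (M : Matroid α) (C : Set α) : Prop :=
  M.Dep C ∧ ∀ D ⊂ C, M.Indep D

/-- A cocircuit: a circuit of the dual. -/
def Matroid.IsCocircuitSet (M : Matroid α) (D : Set α) : Prop :=
  M✶.IsCircuitSet D

/-- A matroid is paving if every circuit has cardinality at least the rank. -/
def Matroid.Paving (M : Matroid α) : Prop :=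
  ∀ C, M.IsCircuitSet C → M.rnk ≤ C.ncard

/-- Sparse paving: both the matroid and its dual are paving. -/
def Matroid.SparsePaving (M : Matroid α) : Prop :=
  M.Paving ∧ M✶.Paving

/-- A matroid has no loops iff every singleton of the ground set is independent. -/
def Matroid.LoopFree (M : Matroid α) : Prop :=
  ∀ e ∈ M.E, M.Indep {e}

/-- A matroid has no coloops iff its dual has no loops. -/
def Matroid.ColoopFree (M : Matroid α) : Prop :=
  M✶.LoopFree

/-- A flat: a set whose rank increases upon adding any element of the ground set outside it. -/
def Matroid.IsFlatSet (M : Matroid α) (F : Set α) : Prop :=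
  F ⊆ M.E ∧ ∀ e ∈ M.E \ F, M.rkFun F < M.rkFun (F ∪ {e})

/-- The number of matroids on ground set `{1, …, n}`. -/
noncomputable def numMatroids (n : ℕ) : ℕ :=
  Nat.card {M : Matroid (Fin n) // M.E = Set.univ}

/-- The number of sparse paving matroids on ground set `{1, …, n}`. -/
noncomputable def numSparsePaving (n : ℕ) : ℕ :=
  Nat.card {M : Matroid (Fin n) // M.E = Set.univ ∧ M.SparsePaving}

/-- The number of loopless, coloopless matroids on ground set `{1, …, n}`. -/
noncomputable def numMatroidsNoLoopColoop (n : ℕ) : ℕ :=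
  Nat.card {M : Matroid (Fin n) // M.E = Set.univ ∧ M.LoopFree ∧ M.ColoopFree}

/-- Number of rank-`r` loopless, coloopless matroids on `{1, …, n}`. -/
noncomputable def numMatroidsNoLoopColoopRk (n r : ℕ) : ℕ :=
  Nat.card {M : Matroid (Fin n) // M.E = Set.univ ∧ M.rnk = r ∧ M.LoopFree ∧ M.ColoopFree}

/-- Number of rank-`r` sparse paving matroids on `{1, …, n}`. -/
noncomputable def numSparsePavingRk (n r : ℕ) : ℕ :=
  Nat.card {M : Matroid (Fin n) // M.E = Set.univ ∧ M.rnk = r ∧ M.SparsePaving}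

/-- The Johnson graph `J(E, r)` on the `r`-element subsets of a type. -/
def johnsonGraph (α : Type*) [DecidableEq α] (r : ℕ) :
    SimpleGraph {X : Finset α // X.card = r} where
  Adj X Y := (X.1 ∆ Y.1).card = 2
  symm := ⟨by intro X Y h; rwa [symmDiff_comm]⟩
  loopless := ⟨by intro X h; simp [symmDiff_self] at h⟩

/-- A stable (independent) set of vertices in a graph. -/
def SimpleGraph.IsStableSet {V : Type*} (G : SimpleGraph V) (s : Set V) : Prop :=
  ∀ ⦃x⦄, x ∈ s → ∀ ⦃y⦄, y ∈ s → ¬ G.Adj x y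

/-- The number of stable sets of a graph. -/
noncomputable def numStableSets {V : Type*} (G : SimpleGraph V) : ℕ :=
  Nat.card {s : Set V // G.IsStableSet s}

open Finset Matrix

namespace Matrix

variable {n : Type*} [Fintype n]

theorem posSemidef_algebraMap_add_of_forall_spectrum_ge [DecidableEq n] {A : Matrix n n ℝ}
    (hA : A.IsHermitian) {lam : ℝ} (hmin : ∀ μ ∈ spectrum ℝ A, -lam ≤ μ) :
    (algebraMap ℝ (Matrix n n ℝ) lam + A).PosSemidef := by
  refine posSemidef_iff_isHermitian_and_spectrum_nonneg.mpr
    ⟨(isHermitian_diagonal _).add hA, fun μ hμ => ?_⟩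
  have : μ - lam ∈ spectrum ℝ A := by
    rw [← spectrum.add_mem_add_iff (s := lam)]
    simpa using hμ
  simpa using hmin _ this

theorem PosSemidef.mul_sq_sum_le_card_mul_dotProduct_mulVec {M : Matrix n n ℝ}
    (hM : M.PosSemidef) {r : ℝ} (hr : M *ᵥ 1 = r • 1) (x : n → ℝ) :
    r * (∑ i, x i) ^ 2 ≤ Fintype.card n * (x ⬝ᵥ M *ᵥ x) := by
  set N : ℝ := (Fintype.card n : ℝ)
  set s := ∑ i, x i
  have hsymm : Mᵀ = M := by simpa using hM.isHermitian.eq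
  have hx1 : x ⬝ᵥ (1 : n → ℝ) = s := by simp [dotProduct, s]
  have h11 : (1 : n → ℝ) ⬝ᵥ (1 : n → ℝ) = N := by simp [dotProduct, N]
  have h1x : (1 : n → ℝ) ⬝ᵥ M *ᵥ x = r * s := by
    rw [dotProduct_mulVec, ← mulVec_transpose, hsymm, hr, dotProduct_comm, dotProduct_smul, hx1,
      smul_eq_mul]
  have hquad := hM.dotProduct_mulVec_nonneg (N • x - s • 1)
  simp only [star_trivial, mulVec_sub, mulVec_smul, hr, dotProduct_sub, sub_dotProduct,
    dotProduct_smul, smul_dotProduct, hx1, h11, h1x, smul_eq_mul] at hquad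
  rcases isEmpty_or_nonempty n with hn | hn
  · simp [s]
  · have hN : 0 < N := by positivity
    nlinarith

end Matrix

theorem Nat.sum_range_succ_choose_succ (n k : ℕ) :
    ∑ s ∈ range (k + 1 + 1), (n + 1).choose s =
      ∑ s ∈ range (k + 1 + 1), n.choose s + ∑ s ∈ range (k + 1), n.choose s := by
  rw [sum_range_succ' _ (k + 1), sum_range_succ' (fun s => n.choose s) (k + 1)]
  simp only [Nat.choose_succ_succ, Nat.choose_zero_right, sum_add_distrib]
  ring

theorem Nat.sum_range_choose_mono {n n' : ℕ} (h : n ≤ n') (k : ℕ) :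
    ∑ s ∈ range k, n.choose s ≤ ∑ s ∈ range k, n'.choose s :=
  sum_le_sum fun s _ => Nat.choose_le_choose s h

namespace SimpleGraph

section

variable {V : Type*} (G : SimpleGraph V)

open Classical in
noncomputable def stableSubsets (C : Finset V) : Finset (Finset V) :=
  {I ∈ C.powerset | G.IsStableSet ↑I}

variable {G}

@[simp]
theorem mem_stableSubsets {C I : Finset V} :
    I ∈ G.stableSubsets C ↔ I ⊆ C ∧ G.IsStableSet ↑I := by
  simp [stableSubsets]

theorem card_stableSubsets_le_two_pow (C : Finset V) : #(G.stableSubsets C) ≤ 2 ^ #C :=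
  (card_le_card fun _ hI => mem_powerset.mpr (mem_stableSubsets.mp hI).1).trans
    (card_powerset C).le

end

variable {V : Type*} [Fintype V] [DecidableEq V] {G : SimpleGraph V} [DecidableRel G.Adj]
  {d : ℕ} {lam : ℝ}

theorem nonneg_of_forall_spectrum_adjMatrix_ge [Nonempty V]
    (hmin : ∀ μ ∈ spectrum ℝ (G.adjMatrix ℝ), -lam ≤ μ) : 0 ≤ lam := by
  obtain ⟨v⟩ := ‹Nonempty V›
  simpa [Algebra.algebraMap_eq_smul_one] using
    (posSemidef_algebraMap_add_of_forall_spectrum_ge (G.isHermitian_adjMatrix ℝ) hmin).diag_nonneg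
      (i := v)

theorem mul_sq_card_le_card_mul_sum_card_neighborFinset_inter (hreg : G.IsRegularOfDegree d)
    (hmin : ∀ μ ∈ spectrum ℝ (G.adjMatrix ℝ), -lam ≤ μ) (C : Finset V) :
    (d + lam) * #C ^ 2 ≤
      Fintype.card V * (∑ v ∈ C, (#(G.neighborFinset v ∩ C) : ℝ) + lam * #C) := by
  set χ : V → ℝ := fun v => if v ∈ C then 1 else 0
  have hM := posSemidef_algebraMap_add_of_forall_spectrum_ge (G.isHermitian_adjMatrix ℝ) hmin
  have hr : (algebraMap ℝ (Matrix V V ℝ) lam + G.adjMatrix ℝ) *ᵥ 1 = (d + lam) • 1 := by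
    ext v
    simp [add_mulVec, Algebra.algebraMap_eq_smul_one, smul_mulVec, hreg v, add_comm]
  convert hM.mul_sq_sum_le_card_mul_dotProduct_mulVec hr χ using 2
  · simp [χ]
  · rw [add_mulVec, dotProduct_add, Algebra.algebraMap_eq_smul_one, smul_mulVec, one_mulVec,
      dotProduct_smul, add_comm]
    congr 1
    · simp [χ, dotProduct, sum_ite_mem]
    · simp [χ, dotProduct]

theorem card_erase_sdiff_neighborFinset_add_card_inter {C : Finset V} {u : V} (hu : u ∈ C) :
    #((C.erase u) \ G.neighborFinset u) + #(G.neighborFinset u ∩ C) + 1 = #C := by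
  have hinter : G.neighborFinset u ∩ C.erase u = G.neighborFinset u ∩ C := by
    ext v
    simp only [mem_inter, mem_erase, mem_neighborFinset]
    exact ⟨fun h => ⟨h.1, h.2.2⟩, fun h => ⟨h.1, (G.ne_of_adj h.1).symm, h.2⟩⟩
  rw [← hinter, inter_comm, card_sdiff_add_card_inter, card_erase_add_one hu]

theorem exists_mem_card_erase_sdiff_neighborFinset_le (hreg : G.IsRegularOfDegree d)
    (hmin : ∀ μ ∈ spectrum ℝ (G.adjMatrix ℝ), -lam ≤ μ) {C : Finset V} (hC : C.Nonempty) :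
    ∃ u ∈ C, (#((C.erase u) \ G.neighborFinset u) : ℝ) ≤
      (1 - (d + lam) / Fintype.card V) * #C + lam - 1 := by
  have : Nonempty V := hC.to_type
  have hN : (0 : ℝ) < Fintype.card V := by exact_mod_cast Fintype.card_pos
  have hsum : ∑ _v ∈ C, (d + lam) * (#C : ℝ) ≤
      ∑ v ∈ C, Fintype.card V * ((#(G.neighborFinset v ∩ C) : ℝ) + lam) := by
    rw [sum_const, ← mul_sum, sum_add_distrib, sum_const, nsmul_eq_mul, nsmul_eq_mul]
    linear_combination mul_sq_card_le_card_mul_sum_card_neighborFinset_inter hreg hmin C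
  obtain ⟨u, hu, hdeg⟩ := exists_le_of_sum_le hC hsum
  refine ⟨u, hu, ?_⟩
  have hcard : (#((C.erase u) \ G.neighborFinset u) : ℝ) + #(G.neighborFinset u ∩ C) + 1 = #C := by
    exact_mod_cast card_erase_sdiff_neighborFinset_add_card_inter hu
  have hdeg' : (d + lam) / Fintype.card V * #C ≤ #(G.neighborFinset u ∩ C) + lam := by
    rw [div_mul_eq_mul_div, div_le_iff₀ hN]
    linarith
  linarith

theorem card_stableSubsets_le_erase_add_sdiff_neighborFinset (C : Finset V) (u : V) :
    #(G.stableSubsets C) ≤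
      #(G.stableSubsets (C.erase u)) + #(G.stableSubsets ((C.erase u) \ G.neighborFinset u)) := by
  refine (card_le_card (t := G.stableSubsets (C.erase u) ∪
    (G.stableSubsets ((C.erase u) \ G.neighborFinset u)).image (insert u)) ?_).trans
    ((card_union_le _ _).trans (Nat.add_le_add_left card_image_le _))
  intro I hI
  rw [mem_stableSubsets] at hI
  by_cases huI : u ∈ I
  · refine mem_union_right _ (mem_image.mpr ⟨I.erase u, ?_, insert_erase huI⟩)
    refine mem_stableSubsets.mpr ⟨fun v hv => ?_, fun x hx y hy => hI.2 (mem_of_mem_erase hx)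
      (mem_of_mem_erase hy)⟩
    have hvI := mem_of_mem_erase hv
    exact mem_sdiff.mpr ⟨mem_erase.mpr ⟨ne_of_mem_erase hv, hI.1 hvI⟩,
      fun h => hI.2 huI hvI ((mem_neighborFinset _ _ _).mp h)⟩
  · exact mem_union_left _ (mem_stableSubsets.mpr
      ⟨fun v hv => mem_erase.mpr ⟨fun h => huI (h ▸ hv), hI.1 hv⟩, hI.2⟩)

theorem card_stableSubsets_le_of_shrink {m : ℕ} {c ρ : ℝ} (hρ : 0 ≤ ρ)
    (hshrink : ∀ C : Finset V, m < #C → ∃ u ∈ C,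
      (#((C.erase u) \ G.neighborFinset u) : ℝ) - c ≤ ρ * (#C - c))
    (k : ℕ) (C : Finset V) (hk : ρ ^ k * (#C - c) < m + 1 - c) :
    #(G.stableSubsets C) ≤ (∑ s ∈ range (k + 1), (#C).choose s) * 2 ^ m := by
  induction C using Finset.strongInduction generalizing k with
  | H C ih =>
  rcases le_or_gt #C m with hCm | hCm
  · have hsum : (#C).choose 0 ≤ ∑ s ∈ range (k + 1), (#C).choose s :=
      single_le_sum (f := fun s => (#C).choose s) (fun _ _ => Nat.zero_le _)
        (mem_range.mpr k.succ_pos)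
    calc #(G.stableSubsets C) ≤ 2 ^ m :=
          (card_stableSubsets_le_two_pow C).trans (Nat.pow_le_pow_right two_pos hCm)
      _ ≤ _ := Nat.le_mul_of_pos_left _ ((Nat.choose_zero_right _).symm.trans_le hsum)
  obtain ⟨u, hu, hstep⟩ := hshrink C hCm
  have hCm' : (m : ℝ) + 1 ≤ #C := by exact_mod_cast hCm
  obtain _ | k := k
  · simp only [pow_zero, one_mul] at hk
    linarith
  set D := (C.erase u) \ G.neighborFinset u
  have hcard : (#(C.erase u) : ℝ) + 1 = #C := by exact_mod_cast card_erase_add_one hu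
  have hDC : #D ≤ #(C.erase u) := card_le_card sdiff_subset
  have herase := ih (C.erase u) (erase_ssubset hu) (k + 1) (by
    refine lt_of_le_of_lt (mul_le_mul_of_nonneg_left ?_ (pow_nonneg hρ _)) hk
    linarith)
  have hD := ih D (_root_.ssubset_of_subset_of_ssubset sdiff_subset (erase_ssubset hu)) k (by
    refine lt_of_le_of_lt ?_ hk
    rw [pow_succ, mul_assoc]
    exact mul_le_mul_of_nonneg_left hstep (pow_nonneg hρ k))
  calc #(G.stableSubsets C)
      ≤ #(G.stableSubsets (C.erase u)) + #(G.stableSubsets D) :=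
        card_stableSubsets_le_erase_add_sdiff_neighborFinset C u
    _ ≤ (∑ s ∈ range (k + 1 + 1), (#(C.erase u)).choose s) * 2 ^ m +
          (∑ s ∈ range (k + 1), (#(C.erase u)).choose s) * 2 ^ m :=
        add_le_add herase (hD.trans (Nat.mul_le_mul_right _ (Nat.sum_range_choose_mono hDC _)))
    _ = (∑ s ∈ range (k + 1 + 1), (#C).choose s) * 2 ^ m := by
        rw [← add_mul, ← Nat.sum_range_succ_choose_succ, card_erase_add_one hu]

end SimpleGraph

theorem numStableSets_eq_card_stableSubsets_univ {V : Type*} [Fintype V] (G : SimpleGraph V) :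
    numStableSets G = #(G.stableSubsets univ) := by
  rw [numStableSets, ← Nat.card_eq_finsetCard]
  exact Nat.card_congr ((Fintype.finsetEquivSet.subtypeEquiv fun _ => Iff.rfl).symm.trans
    (Equiv.subtypeEquivRight fun _ => by simp))

section

open SimpleGraph

variable {V : Type*} [Fintype V] [DecidableEq V] {G : SimpleGraph V} [DecidableRel G.Adj]
  {d : ℕ} {lam : ℝ}

theorem numStableSets_le_of_forall_spectrum_adjMatrix_ge [Nonempty V]
    (hreg : G.IsRegularOfDegree d) (hmin : ∀ μ ∈ spectrum ℝ (G.adjMatrix ℝ), -lam ≤ μ)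
    (hdl : 0 < d + lam) (k : ℕ) (hk : Real.log (d + 1) ≤ (d + lam) / Fintype.card V * k) :
    numStableSets G ≤ (∑ s ∈ range (k + 1), (Fintype.card V).choose s) *
      2 ^ ⌊lam / (d + lam) * Fintype.card V⌋₊ := by
  set N : ℝ := (Fintype.card V : ℝ)
  have hN : 0 < N := by positivity
  set q := (d + lam) / N
  have hq : 0 < q := by positivity
  set a := lam / (d + lam) * N
  set m := ⌊a⌋₊
  have hqN : q * N = d + lam := by simp only [q]; field_simp
  have hqa : q * a = lam := by simp only [q, a]; field_simp
  have ham : a < m + 1 := Nat.lt_floor_add_one a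
  -- fixed point of `x ↦ (1 - q) x + lam - 1`, which bounds the size left after keeping a vertex
  set c := (lam - 1) / q
  have hqc : q * c = lam - 1 := by simp only [c]; field_simp
  have hca : a - c = 1 / q := by
    rw [eq_div_iff hq.ne']
    linarith
  rw [numStableSets_eq_card_stableSubsets_univ G, ← card_univ]
  refine card_stableSubsets_le_of_shrink (c := c) (Real.exp_pos (-q)).le (fun C hC => ?_) k univ ?_
  · obtain ⟨u, hu, hstep⟩ :=
      exists_mem_card_erase_sdiff_neighborFinset_le hreg hmin (card_pos.mp (Nat.zero_lt_of_lt hC))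
    change _ ≤ (1 - q) * _ + lam - 1 at hstep
    have hCc : c ≤ #C := by
      have : (m : ℝ) + 1 ≤ #C := by exact_mod_cast hC
      have : 0 < 1 / q := by positivity
      linarith
    refine ⟨u, hu, ?_⟩
    calc (#((C.erase u) \ G.neighborFinset u) : ℝ) - c ≤ (1 - q) * (#C - c) := by
          linarith
      _ ≤ Real.exp (-q) * (#C - c) :=
          mul_le_mul_of_nonneg_right (by linarith [Real.add_one_le_exp (-q)]) (by linarith)
  · have hexp : Real.exp (-q) ^ k ≤ ((d : ℝ) + 1)⁻¹ := by
      rw [← Real.exp_nat_mul, ← Real.exp_log (x := ((d : ℝ) + 1)⁻¹) (by positivity),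
        Real.log_inv]
      exact Real.exp_le_exp.mpr (by linarith)
    have hNc : (#(univ : Finset V) : ℝ) - c = (d + 1) / q := by
      rw [card_univ, eq_div_iff hq.ne']
      linarith
    calc Real.exp (-q) ^ k * (#(univ : Finset V) - c) ≤ ((d : ℝ) + 1)⁻¹ * ((d + 1) / q) := by
          rw [hNc]
          gcongr
      _ = a - c := by rw [hca]; field_simp
      _ < m + 1 - c := by linarith

end

theorem count_stableSets_regular_graph_general {V : Type*} [Fintype V] [DecidableEq V]
    (G : SimpleGraph V) [DecidableRel G.Adj] (N d : ℕ) (lam : ℝ)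
    (hN : Fintype.card V = N) (hreg : G.IsRegularOfDegree d) (hd : 0 < d)
    (hmin : ∀ μ ∈ spectrum ℝ (G.adjMatrix ℝ), -lam ≤ μ) :
    (numStableSets G : ℝ) ≤
      (∑ s ∈ Finset.range (⌈(Real.log (d + 1) / (d + lam)) * N⌉₊ + 1), (N.choose s : ℝ)) *
        2 ^ ((lam / (d + lam)) * N) := by
  subst hN
  rcases isEmpty_or_nonempty V with hV | hV
  · have := G.card_stableSubsets_le_two_pow univ
    simp_all [numStableSets_eq_card_stableSubsets_univ G]
  have hlam := SimpleGraph.nonneg_of_forall_spectrum_adjMatrix_ge hmin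
  have hdl : 0 < (d : ℝ) + lam := by positivity
  have hN : (0 : ℝ) < Fintype.card V := by exact_mod_cast Fintype.card_pos
  set t := ⌈(Real.log (d + 1) / (d + lam)) * Fintype.card V⌉₊
  have hcount := numStableSets_le_of_forall_spectrum_adjMatrix_ge hreg hmin hdl t (by
    calc Real.log (d + 1)
        = (d + lam) / Fintype.card V * (Real.log (d + 1) / (d + lam) * Fintype.card V) := by
          field_simp
      _ ≤ _ := by gcongr; exact Nat.le_ceil _)
  calc (numStableSets G : ℝ)
      ≤ (∑ s ∈ range (t + 1), ((Fintype.card V).choose s : ℝ)) *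
          2 ^ ⌊lam / (d + lam) * Fintype.card V⌋₊ := by
        exact_mod_cast hcount
    _ ≤ _ := by
        gcongr
        rw [← Real.rpow_natCast]
        exact Real.rpow_le_rpow_of_exponent_le one_le_two (Nat.floor_le (by positivity))

/-- the bound on the number of stable sets in a `d`-regular graph with
smallest adjacency eigenvalue `−λ`:
`i(G) ≤ (Σ_{s=0}^{⌈σN⌉} C(N,s)) · 2^{αN}`, `α = λ/(d+λ)`, `σ = ln(d+1)/(d+λ)`. -/
theorem count_stableSets_regular_graph {V : Type*} [Fintype V] [DecidableEq V]
    (G : SimpleGraph V) [DecidableRel G.Adj] (N d : ℕ) (lam : ℝ)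
    (hN : Fintype.card V = N) (hreg : G.IsRegularOfDegree d) (hd : 0 < d)
    (hmem : -lam ∈ spectrum ℝ (G.adjMatrix ℝ))
    (hmin : ∀ μ ∈ spectrum ℝ (G.adjMatrix ℝ), -lam ≤ μ) :
    (numStableSets G : ℝ) ≤
      (∑ s ∈ Finset.range (⌈(Real.log (d + 1) / (d + lam)) * N⌉₊ + 1), (N.choose s : ℝ)) *
        2 ^ ((lam / (d + lam)) * N) :=
  count_stableSets_regular_graph_general G N d lam hN hreg hd hmin
end

section
/- Let M = (E, B) be a matroid of rank r, let X ⊆ E with |X| = r and r_M(X) = r − 1, let C be the unique circuit of M contained in X, and let D be the unique cocircuit of M disjoint from X. Then for every x ∈ X and y ∈ E \ X, the set (X \ {x}) ∪ {y} is a basis of M if and only if x ∈ C and y ∈ D. Equivalently, N(X) ∩ B = {X − x + y : x ∈ C, y ∈ D}, where N(X) = {X − x + y : x ∈ X, y ∈ E \ X}. -/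
open Filter
open scoped symmDiff

variable {α : Type*}

/-!
Since `C` is the only circuit inside `X`, the set `X - x` is independent exactly when `x ∈ C`, and
it then spans `X`; so `X - x + y` is a basis iff `x ∈ C` and `y ∉ cl X`. Such a basis exists, since
`X - x` has fewer than `r` elements and cannot span, and deleting `y` from it shows that the
complement `E - cl X` of the hyperplane `cl X` is a cocircuit. Being disjoint from `X`, it is `D`.
-/

open Set

namespace Matroid

variable {M : Matroid α} {B I X C : Set α} {x y : α}

lemma isCircuitSet_iff : M.IsCircuitSet C ↔ M.IsCircuit C := by
  rw [isCircuit_iff_forall_ssubset]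
  exact Iff.rfl

lemma isCocircuitSet_iff : M.IsCocircuitSet C ↔ M.IsCocircuit C :=
  isCircuitSet_iff

lemma IsBase.ncard_eq_rnk (hB : M.IsBase B) : B.ncard = M.rnk := by
  have hcards : {k | ∃ B', M.IsBase B' ∧ B'.ncard = k} = {B.ncard} := by
    ext k
    refine ⟨?_, fun hk ↦ ⟨B, hB, hk.symm⟩⟩
    rintro ⟨B', hB', rfl⟩
    exact hB'.ncard_eq_ncard_of_isBase hB
  rw [rnk, hcards, csSup_singleton]

lemma Indep.isBase_of_ncard_eq_rnk [M.RankFinite] (hI : M.Indep I) (hIr : I.ncard = M.rnk) :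
    M.IsBase I := by
  obtain ⟨B, hB, hIB⟩ := hI.exists_isBase_superset
  rwa [eq_of_subset_of_ncard_le hIB (by rw [hIr, hB.ncard_eq_rnk]) hB.indep.finite]

lemma IsCircuit.closure_sdiff_singleton_eq_of_subset (hC : M.IsCircuit C) (hCX : C ⊆ X)
    (hx : x ∈ C) : M.closure (X \ {x}) = M.closure X := by
  have hxcl : x ∈ M.closure (X \ {x}) :=
    M.closure_subset_closure (sdiff_subset_sdiff_left hCX)
      (hC.mem_closure_sdiff_singleton_of_mem hx)
  rw [← closure_insert_eq_of_mem_closure hxcl, insert_sdiff_singleton, insert_eq_of_mem (hCX hx)]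

lemma indep_sdiff_singleton_iff_of_unique_isCircuit (hC : M.IsCircuit C) (hCX : C ⊆ X)
    (hCuniq : ∀ C', M.IsCircuit C' → C' ⊆ X → C' = C) (hXE : X ⊆ M.E) :
    M.Indep (X \ {x}) ↔ x ∈ C := by
  refine ⟨fun hind ↦ by_contra fun hxC ↦ ?_, fun hxC ↦ by_contra fun hdep ↦ ?_⟩
  · exact hC.not_indep (hind.subset (subset_sdiff_singleton hCX hxC))
  obtain ⟨C', hC'X, hC'⟩ :=
    ((M.not_indep_iff (sdiff_subset.trans hXE)).1 hdep).exists_isCircuit_subset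
  obtain rfl := hCuniq C' hC' (hC'X.trans sdiff_subset)
  exact (hC'X hxC).2 rfl

lemma insert_sdiff_indep_iff_of_unique_isCircuit (hC : M.IsCircuit C) (hCX : C ⊆ X)
    (hCuniq : ∀ C', M.IsCircuit C' → C' ⊆ X → C' = C) (hXE : X ⊆ M.E) (hyX : y ∉ X) :
    M.Indep (insert y (X \ {x})) ↔ x ∈ C ∧ y ∈ M.E \ M.closure X := by
  have hsdiff := indep_sdiff_singleton_iff_of_unique_isCircuit (x := x) hC hCX hCuniq hXE
  refine ⟨fun hind ↦ ?_, fun ⟨hxC, hy⟩ ↦ ?_⟩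
  · have hxC := hsdiff.1 (hind.subset (subset_insert y _))
    rw [← hC.closure_sdiff_singleton_eq_of_subset hCX hxC,
      ← (hsdiff.2 hxC).insert_indep_iff_of_notMem fun hy ↦ hyX hy.1]
    exact ⟨hxC, hind⟩
  · rw [(hsdiff.2 hxC).insert_indep_iff_of_notMem fun hy ↦ hyX hy.1,
      hC.closure_sdiff_singleton_eq_of_subset hCX hxC]
    exact hy

lemma isBase_insert_sdiff_iff_of_unique_isCircuit [M.RankFinite] (hC : M.IsCircuit C)
    (hCX : C ⊆ X) (hCuniq : ∀ C', M.IsCircuit C' → C' ⊆ X → C' = C) (hXE : X ⊆ M.E)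
    (hXr : X.ncard = M.rnk) (hxX : x ∈ X) (hyX : y ∉ X) :
    M.IsBase (insert y (X \ {x})) ↔ x ∈ C ∧ y ∈ M.E \ M.closure X := by
  rw [← insert_sdiff_indep_iff_of_unique_isCircuit hC hCX hCuniq hXE hyX]
  refine ⟨IsBase.indep, fun hind ↦ hind.isBase_of_ncard_eq_rnk ?_⟩
  rw [ncard_exchange hyX hxX, hXr]

lemma compl_closure_isCocircuit_of_unique_isCircuit [M.RankFinite] (hC : M.IsCircuit C)
    (hCX : C ⊆ X) (hCuniq : ∀ C', M.IsCircuit C' → C' ⊆ X → C' = C) (hXE : X ⊆ M.E)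
    (hXr : X.ncard = M.rnk) : M.IsCocircuit (M.E \ M.closure X) := by
  obtain ⟨x, hxC⟩ := hC.nonempty
  have hxX := hCX hxC
  have hind := (indep_sdiff_singleton_iff_of_unique_isCircuit hC hCX hCuniq hXE).2 hxC
  have hcl := hC.closure_sdiff_singleton_eq_of_subset hCX hxC
  obtain ⟨y, hyE, hycl⟩ : ∃ y ∈ M.E, y ∉ M.closure X := by
    by_contra! hsp
    have hB : M.IsBase (X \ {x}) := hind.isBase_of_spanning <| by
      rw [spanning_iff_closure_eq hind.subset_ground, hcl]
      exact (M.closure_subset_ground X).antisymm hsp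
    have hlt := ncard_sdiff_singleton_lt_of_mem hxX (hind.finite.of_sdiff (finite_singleton x))
    rw [hB.ncard_eq_rnk, hXr] at hlt
    exact hlt.false
  have hyX : y ∉ X := fun hy ↦ hycl (M.subset_closure X hXE hy)
  have hB := (isBase_insert_sdiff_iff_of_unique_isCircuit hC hCX hCuniq hXE hXr hxX hyX).2
    ⟨hxC, hyE, hycl⟩
  have hK := hB.compl_closure_sdiff_singleton_isCocircuit (mem_insert y _)
  rwa [insert_sdiff_self_of_notMem fun hy ↦ hyX hy.1, hcl] at hK

end Matroid

theorem bases_in_neighbourhood_general {α : Type*} (M : Matroid α) [M.Finite] (r : ℕ)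
    (hr : M.rnk = r) (X : Set α) (hXE : X ⊆ M.E) (hXcard : X.ncard = r)
    (C : Set α) (hC : M.IsCircuitSet C) (hCX : C ⊆ X)
    (hCuniq : ∀ C' : Set α, M.IsCircuitSet C' → C' ⊆ X → C' = C)
    (D : Set α)
    (hDuniq : ∀ D' : Set α, M.IsCocircuitSet D' → D' ∩ X = ∅ → D' = D) :
    ∀ x ∈ X, ∀ y ∈ M.E \ X, (M.IsBase (insert y (X \ {x})) ↔ x ∈ C ∧ y ∈ D) := by
  intro x hx y hy
  rw [Matroid.isCircuitSet_iff] at hC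
  replace hCuniq C' hC' := hCuniq C' (Matroid.isCircuitSet_iff.2 hC')
  have hXr : X.ncard = M.rnk := hXcard.trans hr.symm
  have hK := M.compl_closure_isCocircuit_of_unique_isCircuit hC hCX hCuniq hXE hXr
  have hD : M.E \ M.closure X = D := hDuniq _ (Matroid.isCocircuitSet_iff.2 hK)
    (disjoint_iff_inter_eq_empty.1 (disjoint_sdiff_left.mono_right (M.subset_closure X)))
  rw [← hD]
  exact M.isBase_insert_sdiff_iff_of_unique_isCircuit hC hCX hCuniq hXE hXr hx hy.2

/-- with `C` the unique circuit contained in `X` and `D` the unique cocircuit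
disjoint from `X`, the set `X − x + y` is a basis iff `x ∈ C` and `y ∈ D`. -/
theorem bases_in_neighbourhood {α : Type*} (M : Matroid α) [M.Finite] (r : ℕ)
    (hr : M.rnk = r) (X : Set α) (hXE : X ⊆ M.E) (hXcard : X.ncard = r)
    (hrX : M.rkFun X + 1 = r)
    (C : Set α) (hC : M.IsCircuitSet C) (hCX : C ⊆ X)
    (hCuniq : ∀ C' : Set α, M.IsCircuitSet C' → C' ⊆ X → C' = C)
    (D : Set α) (hD : M.IsCocircuitSet D) (hDX : D ∩ X = ∅)
    (hDuniq : ∀ D' : Set α, M.IsCocircuitSet D' → D' ∩ X = ∅ → D' = D) :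
    ∀ x ∈ X, ∀ y ∈ M.E \ X, (M.IsBase (insert y (X \ {x})) ↔ x ∈ C ∧ y ∈ D) :=
  bases_in_neighbourhood_general M r hr X hXE hXcard C hC hCX hCuniq D hDuniq
end

section
/- For all integers n ≥ 1 and 0 ≤ r ≤ n, the number of stable sets in the Johnson graph satisfies i(J(n,r)) ≥ 2^{C(n,r)/n}; equivalently, log i(J(n,r)) ≥ (1/n) C(n,r). -/
open Filter
open scoped symmDiff

variable {α : Type*}

/-! Adjacent vertices of `J(n, r)` differ by exchanging one element for another, so the weight
`X ↦ ∑ x ∈ X, x`, computed in the cyclic group `Fin n`, differs at the two ends of every edge.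
Its `n` level sets are therefore stable, by pigeonhole one of them has at least `C(n, r) / n`
vertices, and each of its subsets is again stable. -/

open Finset

namespace SimpleGraph

variable {V : Type*} {G : SimpleGraph V}

theorem IsStableSet.mono {s t : Set V} (ht : G.IsStableSet t) (hst : s ⊆ t) :
    G.IsStableSet s :=
  fun _ hx _ hy => ht (hst hx) (hst hy)

theorem two_pow_card_le_numStableSets [Finite V] {s : Finset V} (hs : G.IsStableSet s) :
    2 ^ #s ≤ numStableSets G := by
  let subsetToStable : s.powerset → {t : Set V // G.IsStableSet t} :=
    fun t => ⟨t.1, hs.mono (coe_subset.mpr (mem_powerset.mp t.2))⟩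
  have hinj : Function.Injective subsetToStable := fun t u htu =>
    Subtype.ext (coe_injective (congrArg Subtype.val htu))
  calc 2 ^ #s = Nat.card s.powerset := by
        rw [Nat.card_eq_fintype_card, Fintype.card_coe, card_powerset]
    _ ≤ numStableSets G := Nat.card_le_card_of_injective subsetToStable hinj

end SimpleGraph

section Johnson

variable [DecidableEq α] {r : ℕ}

theorem johnsonGraph_adj_exists_sdiff_eq_singleton {X Y : {X : Finset α // X.card = r}}
    (h : (johnsonGraph α r).Adj X Y) : ∃ a b, X.1 \ Y.1 = {a} ∧ Y.1 \ X.1 = {b} := by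
  have hsdiff : #(X.1 \ Y.1) = #(Y.1 \ X.1) := card_sdiff_comm (X.2.trans Y.2.symm)
  have hsum : #(X.1 \ Y.1) + #(Y.1 \ X.1) = 2 := by
    rw [← card_union_of_disjoint disjoint_sdiff_sdiff]
    exact h
  obtain ⟨a, ha⟩ := card_eq_one.mp (show #(X.1 \ Y.1) = 1 by omega)
  obtain ⟨b, hb⟩ := card_eq_one.mp (show #(Y.1 \ X.1) = 1 by omega)
  exact ⟨a, b, ha, hb⟩

theorem johnsonGraph_isStableSet_sum_eq {M : Type*} [AddCancelCommMonoid M] {f : α → M}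
    (hf : Function.Injective f) (c : M) :
    (johnsonGraph α r).IsStableSet {X | ∑ x ∈ X.1, f x = c} := by
  intro X hX Y hY hadj
  obtain ⟨a, b, ha, hb⟩ := johnsonGraph_adj_exists_sdiff_eq_singleton hadj
  have hsum : ∑ x ∈ X.1 ∩ Y.1, f x + f a = ∑ x ∈ X.1 ∩ Y.1, f x + f b := by
    rw [← sum_singleton f a, ← ha, sum_inter_add_sum_sdiff, ← sum_singleton f b, ← hb,
      inter_comm, sum_inter_add_sum_sdiff, hX, hY]
  have haX : a ∈ X.1 \ Y.1 := ha ▸ mem_singleton_self a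
  have hbY : b ∈ Y.1 \ X.1 := hb ▸ mem_singleton_self b
  rw [hf (add_left_cancel hsum)] at haX
  exact (mem_sdiff.mp haX).2 (mem_sdiff.mp hbY).1

theorem exists_isStableSet_johnsonGraph_fin (n r : ℕ) [NeZero n] :
    ∃ s : Finset {X : Finset (Fin n) // X.card = r},
      (johnsonGraph (Fin n) r).IsStableSet s ∧ (n.choose r : ℝ) / n ≤ #s := by
  have hcard : Fintype.card (Fin n) • ((n.choose r : ℝ) / n) ≤
      Fintype.card {X : Finset (Fin n) // X.card = r} := by
    rw [Fintype.card_finset_len, Fintype.card_fin, nsmul_eq_mul,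
      mul_div_cancel₀ _ (Nat.cast_ne_zero.mpr (NeZero.ne n))]
  obtain ⟨c, hc⟩ := Fintype.exists_le_card_fiber_of_nsmul_le_card
    (fun X : {X : Finset (Fin n) // X.card = r} => ∑ x ∈ X.1, x) hcard
  refine ⟨_, fun X hX Y hY => ?_, hc⟩
  simp only [coe_filter, mem_univ, true_and] at hX hY
  exact johnsonGraph_isStableSet_sum_eq Function.injective_id c hX hY

end Johnson

theorem johnson_stableSets_lower_general (n r : ℕ) (hn : 1 ≤ n) :
    (2 : ℝ) ^ ((n.choose r : ℝ) / n) ≤ (numStableSets (johnsonGraph (Fin n) r) : ℝ) := by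
  have : NeZero n := ⟨by omega⟩
  obtain ⟨s, hs, hcard⟩ := exists_isStableSet_johnsonGraph_fin n r
  calc (2 : ℝ) ^ ((n.choose r : ℝ) / n) ≤ (2 : ℝ) ^ (#s : ℝ) :=
        Real.rpow_le_rpow_of_exponent_le one_le_two hcard
    _ = ((2 ^ #s : ℕ) : ℝ) := by rw [Real.rpow_natCast, Nat.cast_pow, Nat.cast_ofNat]
    _ ≤ numStableSets (johnsonGraph (Fin n) r) :=
        Nat.cast_le.mpr (SimpleGraph.two_pow_card_le_numStableSets hs)

/-- `i(J(n,r)) ≥ 2^{C(n,r)/n}` for `n ≥ 1` and `0 ≤ r ≤ n`. -/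
theorem johnson_stableSets_lower (n r : ℕ) (hn : 1 ≤ n) (hr : r ≤ n) :
    (2 : ℝ) ^ ((n.choose r : ℝ) / n) ≤ (numStableSets (johnsonGraph (Fin n) r) : ℝ) :=
  johnson_stableSets_lower_general n r hn
end

section
/- Let n, r be integers with 1 ≤ r ≤ n/2. Then every stable set in the Johnson graph J(n,r) has cardinality at most C(n,r)/(n−r+1) (the Hoffman bound α_{n,r}·C(n,r) with α_{n,r} = 1/(n−r+1)). -/
open Filter
open scoped symmDiff

variable {α : Type*}

/-!
The `r`-sets of a stable set of `J(n, r)` have pairwise disjoint `(r - 1)`-shadows, since two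
distinct `r`-sets sharing an `(r - 1)`-subset are adjacent. Each shadow has `r` elements, so
`|S| r ≤ C(n, r - 1)`, and `C(n, r - 1) = C(n, r) r / (n - r + 1)`.
-/

namespace Finset

variable [DecidableEq α]

theorem card_symmDiff_add_two_mul_card_inter (s t : Finset α) :
    #(s ∆ t) + 2 * #(s ∩ t) = #s + #t := by
  rw [symmDiff_def, sup_eq_union, card_union_of_disjoint disjoint_sdiff_sdiff]
  have hs := card_sdiff_add_card_inter s t
  have ht := card_sdiff_add_card_inter t s
  rw [inter_comm] at ht
  omega

end Finset

open Finset

section JohnsonGraph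

variable [DecidableEq α] {k : ℕ}

theorem johnsonGraph_adj_of_card_inter {X Y : {X : Finset α // #X = k + 1}}
    (h : #(X.1 ∩ Y.1) = k) : (johnsonGraph α (k + 1)).Adj X Y := by
  obtain ⟨X, hX⟩ := X
  obtain ⟨Y, hY⟩ := Y
  change #(X ∩ Y) = k at h
  show #(X ∆ Y) = 2
  have := card_symmDiff_add_two_mul_card_inter X Y
  omega

theorem johnsonGraph_adj_of_subset {X Y : {X : Finset α // #X = k + 1}} (hXY : X ≠ Y)
    {A : Finset α} (hAX : A ⊆ X.1) (hAY : A ⊆ Y.1) (hA : #A = k) :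
    (johnsonGraph α (k + 1)).Adj X Y := by
  refine johnsonGraph_adj_of_card_inter ?_
  obtain ⟨X, hX⟩ := X
  obtain ⟨Y, hY⟩ := Y
  have hne : X ∩ Y ≠ X := fun h => hXY <| Subtype.ext <|
    eq_of_subset_of_card_le (inter_eq_left.1 h) (by rw [hX, hY])
  have hlt := card_lt_card (inter_subset_left.ssubset_of_ne hne)
  have hge := card_le_card (subset_inter hAX hAY)
  dsimp only at hge ⊢
  omega

theorem SimpleGraph.IsStableSet.pairwiseDisjoint_powersetCard
    {S : Set {X : Finset α // #X = k + 1}} (hS : (johnsonGraph α (k + 1)).IsStableSet S) :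
    S.PairwiseDisjoint (fun X => powersetCard k X.1) := by
  intro X hX Y hY hXY
  rw [Function.onFun, Finset.disjoint_left]
  intro A hAX hAY
  rw [mem_powersetCard] at hAX hAY
  exact hS hX hY (johnsonGraph_adj_of_subset hXY hAX.1 hAY.1 hAX.2)

variable [Fintype α]

theorem SimpleGraph.IsStableSet.ncard_mul_le_choose
    {S : Set {X : Finset α // #X = k + 1}} (hS : (johnsonGraph α (k + 1)).IsStableSet S) :
    S.ncard * (k + 1) ≤ (Fintype.card α).choose k := by
  classical
  have hdisj : (S.toFinset : Set {X : Finset α // #X = k + 1}).PairwiseDisjoint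
      (fun X => powersetCard k X.1) := by
    simpa using hS.pairwiseDisjoint_powersetCard
  calc S.ncard * (k + 1) = #(S.toFinset.biUnion fun X => powersetCard k X.1) := by
        rw [card_biUnion hdisj, Set.ncard_eq_toFinset_card', sum_const_nat fun X _ => by rw [card_powersetCard, X.2, Nat.choose_succ_self_right]]
    _ ≤ #(powersetCard k (univ : Finset α)) :=
        card_le_card <| biUnion_subset.2 fun X _ => powersetCard_mono (subset_univ _)
    _ = (Fintype.card α).choose k := by rw [card_powersetCard, card_univ]

theorem SimpleGraph.IsStableSet.ncard_mul_le_choose_succ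
    {S : Set {X : Finset α // #X = k + 1}} (hS : (johnsonGraph α (k + 1)).IsStableSet S) :
    S.ncard * (Fintype.card α - k) ≤ (Fintype.card α).choose (k + 1) := by
  refine Nat.le_of_mul_le_mul_right ?_ k.succ_pos
  calc S.ncard * (Fintype.card α - k) * (k + 1)
      = S.ncard * (k + 1) * (Fintype.card α - k) := by ring
    _ ≤ (Fintype.card α).choose k * (Fintype.card α - k) := by
        gcongr; exact hS.ncard_mul_le_choose
    _ = (Fintype.card α).choose (k + 1) * (k + 1) := (Nat.choose_succ_right_eq _ _).symm

end JohnsonGraph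

/-- the Hoffman bound: every stable set of `J(n,r)` (`1 ≤ r ≤ n/2`)
has cardinality at most `C(n,r)/(n−r+1)`. -/
theorem johnson_stable_set_card_le (n r : ℕ) (hr : 1 ≤ r) (hrn : 2 * r ≤ n)
    (S : Set {X : Finset (Fin n) // X.card = r})
    (hS : (johnsonGraph (Fin n) r).IsStableSet S) :
    (S.ncard : ℝ) ≤ (n.choose r : ℝ) / ((n : ℝ) - r + 1) := by
  obtain ⟨k, rfl⟩ := Nat.exists_eq_add_of_le' hr
  have hkn : k + 1 ≤ n := by omega
  have hbound := hS.ncard_mul_le_choose_succ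
  rw [Fintype.card_fin] at hbound
  have hkn' : (k : ℝ) + 1 ≤ n := by exact_mod_cast hkn
  rw [le_div_iff₀ (by push_cast; linarith)]
  convert (Nat.cast_le (α := ℝ)).2 hbound using 1
  push_cast [Nat.cast_sub (k.le_succ.trans hkn)]
  ring
end
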